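/- (Proposition 2.1) Assume the TBT matrix T is invertible. Then for both p = 1 and p = 2, and for all complex λ1, λ2 ≠ i/2 and μ1, μ2 ≠ −i/2 with λ_p ≠ μ_p, one has ω(λ, μ) = i·(λ_p − μ_p)^{-1} · u(μ) · P_p · û(λ). -/

import Mathlib

open Matrix

noncomputable section

/-- The scalar sequence `a_r`: `0` for `r < 0`, `i/2` for `r = 0`, `i` for `r > 0`. -/
def aC (r : ℤ) : ℂ := if r < 0 then 0 else if r = 0 then Complex.I / 2 else Complex.I

/-- `A_1`: block matrix `{𝒜_{1,p−q}}` with blocks `0`, `(i/2)I_m`, `i·I_m`. -/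
def A1 (m n : ℕ) : Matrix (Fin n × Fin m) (Fin n × Fin m) ℂ :=
  Matrix.of fun r c => if r.2 = c.2 then aC (((r.1 : ℕ) : ℤ) - ((c.1 : ℕ) : ℤ)) else 0

/-- `A_2 = diag{𝒜_{2,0}, …, 𝒜_{2,0}}`. -/
def A2 (m n : ℕ) : Matrix (Fin n × Fin m) (Fin n × Fin m) ℂ :=
  Matrix.of fun r c => if r.1 = c.1 then aC (((r.2 : ℕ) : ℤ) - ((c.2 : ℕ) : ℤ)) else 0

/-- `𝒜_1 = {a_{j−ℓ}}_{j,ℓ=1}^n`. -/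
def calA1 (n : ℕ) : Matrix (Fin n) (Fin n) ℂ :=
  Matrix.of fun p q => aC (((p : ℕ) : ℤ) - ((q : ℕ) : ℤ))

/-- `𝒜_2 = {a_{j−ℓ}}_{j,ℓ=1}^m`. -/
def calA2 (m : ℕ) : Matrix (Fin m) (Fin m) ℂ :=
  Matrix.of fun j l => aC (((j : ℕ) : ℤ) - ((l : ℕ) : ℤ))

/-- The Toeplitz-block Toeplitz matrix `T`, entry `t_{p−q}^{(j−ℓ)}`. -/
def TBT (m n : ℕ) (t : ℤ → ℤ → ℂ) : Matrix (Fin n × Fin m) (Fin n × Fin m) ℂ :=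
  Matrix.of fun r c =>
    t (((r.1 : ℕ) : ℤ) - ((c.1 : ℕ) : ℤ)) (((r.2 : ℕ) : ℤ) - ((c.2 : ℕ) : ℤ))

/-- `M_{11}`: block column, `p`-th block `(1/2)𝒯_0 + Σ_{s=1}^{p−1} 𝒯_s`. -/
def M11 (m n : ℕ) (t : ℤ → ℤ → ℂ) : Matrix (Fin n × Fin m) (Fin m) ℂ :=
  Matrix.of fun r l => (1 / 2 : ℂ) * t 0 (((r.2 : ℕ) : ℤ) - ((l : ℕ) : ℤ))
    + ∑ s ∈ Finset.range (r.1 : ℕ), t ((s : ℤ) + 1) (((r.2 : ℕ) : ℤ) - ((l : ℕ) : ℤ))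

/-- `M_{21} = [I_m I_m … I_m]`. -/
def M21 (m n : ℕ) : Matrix (Fin m) (Fin n × Fin m) ℂ :=
  Matrix.of fun j c => if j = c.2 then 1 else 0

/-- `M_{31} = M_{21}^*`. -/
def M31 (m n : ℕ) : Matrix (Fin n × Fin m) (Fin m) ℂ := (M21 m n)ᴴ

/-- `M_{41}`: block row, `q`-th block `(1/2)𝒯_0 + Σ_{s=1}^{q−1} 𝒯_{−s}`. -/
def M41 (m n : ℕ) (t : ℤ → ℤ → ℂ) : Matrix (Fin m) (Fin n × Fin m) ℂ :=
  Matrix.of fun j c => (1 / 2 : ℂ) * t 0 (((j : ℕ) : ℤ) - ((c.2 : ℕ) : ℤ))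
    + ∑ s ∈ Finset.range (c.1 : ℕ), t (-((s : ℤ) + 1)) (((j : ℕ) : ℤ) - ((c.2 : ℕ) : ℤ))

/-- `j`-th entry of the column `ℳ_{12}^{(r)}`. -/
def m12e (m : ℕ) (t : ℤ → ℤ → ℂ) (r : ℤ) (j : Fin m) : ℂ :=
  (1 / 2 : ℂ) * t r 0 + ∑ s ∈ Finset.range (j : ℕ), t r ((s : ℤ) + 1)

/-- `ℓ`-th entry of the row `ℳ_{42}^{(r)}`. -/
def m42e (m : ℕ) (t : ℤ → ℤ → ℂ) (r : ℤ) (l : Fin m) : ℂ :=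
  (1 / 2 : ℂ) * t r 0 + ∑ s ∈ Finset.range (l : ℕ), t r (-((s : ℤ) + 1))

/-- `M_{12} = {ℳ_{12}^{(p−q)}}`. -/
def M12 (m n : ℕ) (t : ℤ → ℤ → ℂ) : Matrix (Fin n × Fin m) (Fin n) ℂ :=
  Matrix.of fun r q => m12e m t (((r.1 : ℕ) : ℤ) - ((q : ℕ) : ℤ)) r.2

/-- `M_{22}`. -/
def M22 (m n : ℕ) : Matrix (Fin n) (Fin n × Fin m) ℂ :=
  Matrix.of fun p c => if p = c.1 then 1 else 0

/-- `M_{32} = M_{22}^*`. -/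
def M32 (m n : ℕ) : Matrix (Fin n × Fin m) (Fin n) ℂ := (M22 m n)ᴴ

/-- `M_{42} = {ℳ_{42}^{(p−q)}}`. -/
def M42 (m n : ℕ) (t : ℤ → ℤ → ℂ) : Matrix (Fin n) (Fin n × Fin m) ℂ :=
  Matrix.of fun p c => m42e m t (((p : ℕ) : ℤ) - ((c.1 : ℕ) : ℤ)) c.2

/-- `K`: the `1×mn` row, `q`-th block `(1/2)ℳ_{42}^{(0)} + Σ_{s=1}^{q−1} ℳ_{42}^{(−s)}`. -/
def Krow (m n : ℕ) (t : ℤ → ℤ → ℂ) : (Fin n × Fin m) → ℂ :=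
  fun c => (1 / 2 : ℂ) * m42e m t 0 c.2
    + ∑ s ∈ Finset.range (c.1 : ℕ), m42e m t (-((s : ℤ) + 1)) c.2

/-- `K_{11}`: `p`-th row `(1/2)ℳ_{42}^{(0)} + Σ_{s=1}^{p−1} ℳ_{42}^{(s)}`. -/
def K11 (m n : ℕ) (t : ℤ → ℤ → ℂ) : Matrix (Fin n) (Fin m) ℂ :=
  Matrix.of fun p l => (1 / 2 : ℂ) * m42e m t 0 l
    + ∑ s ∈ Finset.range (p : ℕ), m42e m t ((s : ℤ) + 1) l

/-- `K_{12}`: `q`-th column `(1/2)ℳ_{12}^{(0)} + Σ_{s=1}^{q−1} ℳ_{12}^{(−s)}`. -/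
def K12 (m n : ℕ) (t : ℤ → ℤ → ℂ) : Matrix (Fin m) (Fin n) ℂ :=
  Matrix.of fun j q => (1 / 2 : ℂ) * m12e m t 0 j
    + ∑ s ∈ Finset.range (q : ℕ), m12e m t (-((s : ℤ) + 1)) j

/-- `Π_1 = [M_{11} M_{31}]`. -/
def Pi1 (m n : ℕ) (t : ℤ → ℤ → ℂ) : Matrix (Fin n × Fin m) (Fin m ⊕ Fin m) ℂ :=
  fromCols (M11 m n t) (M31 m n)

/-- `Π_2 = [M_{12} M_{32}]`. -/
def Pi2 (m n : ℕ) (t : ℤ → ℤ → ℂ) : Matrix (Fin n × Fin m) (Fin n ⊕ Fin n) ℂ :=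
  fromCols (M12 m n t) (M32 m n)

/-- `Π̂_1 = col[M_{21}; M_{41}]`. -/
def PiHat1 (m n : ℕ) (t : ℤ → ℤ → ℂ) : Matrix (Fin m ⊕ Fin m) (Fin n × Fin m) ℂ :=
  fromRows (M21 m n) (M41 m n t)

/-- `Π̂_2 = col[M_{22}; M_{42}]`. -/
def PiHat2 (m n : ℕ) (t : ℤ → ℤ → ℂ) : Matrix (Fin n ⊕ Fin n) (Fin n × Fin m) ℂ :=
  fromRows (M22 m n) (M42 m n t)

/-- All-ones vector. -/
def onesV (k : Type*) : k → ℂ := fun _ => 1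

/-- `g_{12} = i·Π̂_1 T^{-1} Π_2 − i·[[𝟏_m 𝟏_n^*, 0],[K_{12}, 0]]`. -/
def g12M (m n : ℕ) (t : ℤ → ℤ → ℂ) : Matrix (Fin m ⊕ Fin m) (Fin n ⊕ Fin n) ℂ :=
  Complex.I • (PiHat1 m n t * (TBT m n t)⁻¹ * Pi2 m n t)
    - Complex.I • fromBlocks (vecMulVec (onesV (Fin m)) (onesV (Fin n))) 0 (K12 m n t) 0

/-- `g_{21} = i·Π̂_2 T^{-1} Π_1 − i·[[𝟏_n 𝟏_m^*, 0],[K_{11}, 0]]`. -/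
def g21M (m n : ℕ) (t : ℤ → ℤ → ℂ) : Matrix (Fin n ⊕ Fin n) (Fin m ⊕ Fin m) ℂ :=
  Complex.I • (PiHat2 m n t * (TBT m n t)⁻¹ * Pi1 m n t)
    - Complex.I • fromBlocks (vecMulVec (onesV (Fin n)) (onesV (Fin m))) 0 (K11 m n t) 0

/-- The `k×k` flip (anti-diagonal) matrix. -/
def flipU (k : ℕ) : Matrix (Fin k) (Fin k) ℂ :=
  Matrix.of fun p q => if (p : ℕ) + (q : ℕ) + 1 = k then 1 else 0

/-- `U_{2k}`, the `2k×2k` flip matrix on the sum type. -/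
def U2 (k : ℕ) : Matrix (Fin k ⊕ Fin k) (Fin k ⊕ Fin k) ℂ :=
  fromBlocks 0 (flipU k) (flipU k) 0

/-- `J_{2k} = diag{I_k, −I_k}`. -/
def J2 (k : ℕ) : Matrix (Fin k ⊕ Fin k) (Fin k ⊕ Fin k) ℂ :=
  fromBlocks 1 0 0 (-1)

/-- `U = U_{mn}`, the `mn×mn` flip matrix (global index `m·p + j`). -/
def UmnM (m n : ℕ) : Matrix (Fin n × Fin m) (Fin n × Fin m) ℂ :=
  Matrix.of fun r c =>
    if m * (r.1 : ℕ) + (r.2 : ℕ) + (m * (c.1 : ℕ) + (c.2 : ℕ)) + 1 = m * n then 1 else 0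

/-- `ψ(λ) = (λ + i/2)/(λ − i/2)`. -/
def psiM (l : ℂ) : ℂ := (l + Complex.I / 2) / (l - Complex.I / 2)

/-- `h(y_1, y_2)`, entry `y_1^{p−1} y_2^{j−1}`. -/
def hVec (m n : ℕ) (y1 y2 : ℂ) : (Fin n × Fin m) → ℂ :=
  fun r => y1 ^ (r.1 : ℕ) * y2 ^ (r.2 : ℕ)

/-- `ω(λ,μ) = 𝟏^*(A_1^*−μ_1)^{-1}(A_2^*−μ_2)^{-1}T^{-1}(A_2−λ_2)^{-1}(A_1−λ_1)^{-1}𝟏`. -/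
def omegaF (m n : ℕ) (t : ℤ → ℤ → ℂ) (l1 l2 u1 u2 : ℂ) : ℂ :=
  star (onesV (Fin n × Fin m)) ⬝ᵥ
    ((((A1 m n)ᴴ - u1 • 1)⁻¹ * ((A2 m n)ᴴ - u2 • 1)⁻¹ * (TBT m n t)⁻¹ *
      (A2 m n - l2 • 1)⁻¹ * (A1 m n - l1 • 1)⁻¹) *ᵥ onesV (Fin n × Fin m))

/-- `ρ(y,z) = h(conj z_1, conj z_2)^* T^{-1} h(y_1,y_2)`. -/
def rhoF (m n : ℕ) (t : ℤ → ℤ → ℂ) (y1 y2 z1 z2 : ℂ) : ℂ :=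
  star (hVec m n ((starRingEnd ℂ) z1) ((starRingEnd ℂ) z2)) ⬝ᵥ
    ((TBT m n t)⁻¹ *ᵥ hVec m n y1 y2)

/-- `Γ_1 = T^{-1}Π_1`. -/
def Gam1 (m n : ℕ) (t : ℤ → ℤ → ℂ) : Matrix (Fin n × Fin m) (Fin m ⊕ Fin m) ℂ :=
  (TBT m n t)⁻¹ * Pi1 m n t

/-- `Γ_2 = T^{-1}Π_2`. -/
def Gam2 (m n : ℕ) (t : ℤ → ℤ → ℂ) : Matrix (Fin n × Fin m) (Fin n ⊕ Fin n) ℂ :=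
  (TBT m n t)⁻¹ * Pi2 m n t

/-- `Γ̂_1 = Π̂_1 T^{-1}`. -/
def GamHat1 (m n : ℕ) (t : ℤ → ℤ → ℂ) : Matrix (Fin m ⊕ Fin m) (Fin n × Fin m) ℂ :=
  PiHat1 m n t * (TBT m n t)⁻¹

/-- `Γ̂_2 = Π̂_2 T^{-1}`. -/
def GamHat2 (m n : ℕ) (t : ℤ → ℤ → ℂ) : Matrix (Fin n ⊕ Fin n) (Fin n × Fin m) ℂ :=
  PiHat2 m n t * (TBT m n t)⁻¹

/-- `Γ = [Γ_1 Γ_2]`. -/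
def GammaFull (m n : ℕ) (t : ℤ → ℤ → ℂ) :
    Matrix (Fin n × Fin m) ((Fin m ⊕ Fin m) ⊕ (Fin n ⊕ Fin n)) ℂ :=
  fromCols (Gam1 m n t) (Gam2 m n t)

/-- `Γ̂ = col[Γ̂_1; Γ̂_2]`. -/
def GammaHatFull (m n : ℕ) (t : ℤ → ℤ → ℂ) :
    Matrix ((Fin m ⊕ Fin m) ⊕ (Fin n ⊕ Fin n)) (Fin n × Fin m) ℂ :=
  fromRows (GamHat1 m n t) (GamHat2 m n t)

/-- The row vector `u(μ)`. -/
def uRow (m n : ℕ) (t : ℤ → ℤ → ℂ) (u1 u2 : ℂ) :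
    ((Fin m ⊕ Fin m) ⊕ (Fin n ⊕ Fin n)) → ℂ :=
  star (onesV (Fin n × Fin m)) ᵥ*
      (((A1 m n)ᴴ - u1 • 1)⁻¹ * ((A2 m n)ᴴ - u2 • 1)⁻¹ * GammaFull m n t)
    - Complex.I • Sum.elim
        (Sum.elim (star (onesV (Fin m)) ᵥ* ((calA2 m)ᴴ - u2 • 1)⁻¹) (0 : Fin m → ℂ))
        (Sum.elim (star (onesV (Fin n)) ᵥ* ((calA1 n)ᴴ - u1 • 1)⁻¹) (0 : Fin n → ℂ))

/-- The column vector `û(λ)`. -/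
def uHatCol (m n : ℕ) (t : ℤ → ℤ → ℂ) (l1 l2 : ℂ) :
    ((Fin m ⊕ Fin m) ⊕ (Fin n ⊕ Fin n)) → ℂ :=
  (GammaHatFull m n t * (A2 m n - l2 • 1)⁻¹ * (A1 m n - l1 • 1)⁻¹) *ᵥ onesV (Fin n × Fin m)
    + Complex.I • Sum.elim
        (Sum.elim (0 : Fin m → ℂ) ((calA2 m - l2 • 1)⁻¹ *ᵥ onesV (Fin m)))
        (Sum.elim (0 : Fin n → ℂ) ((calA1 n - l1 • 1)⁻¹ *ᵥ onesV (Fin n)))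

/-- `P_1 = diag{I_{2m}, 0}`. -/
def P1M (m n : ℕ) :
    Matrix ((Fin m ⊕ Fin m) ⊕ (Fin n ⊕ Fin n)) ((Fin m ⊕ Fin m) ⊕ (Fin n ⊕ Fin n)) ℂ :=
  fromBlocks 1 0 0 0

/-- `P_2 = I − P_1`. -/
def P2M (m n : ℕ) :
    Matrix ((Fin m ⊕ Fin m) ⊕ (Fin n ⊕ Fin n)) ((Fin m ⊕ Fin m) ⊕ (Fin n ⊕ Fin n)) ℂ :=
  1 - P1M m n

/-- `G(λ)`, built from `g_{12}` and `g_{21}`. -/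
def GMat (m n : ℕ) (g12 : Matrix (Fin m ⊕ Fin m) (Fin n ⊕ Fin n) ℂ)
    (g21 : Matrix (Fin n ⊕ Fin n) (Fin m ⊕ Fin m) ℂ) (l1 l2 : ℂ) :
    Matrix ((Fin m ⊕ Fin m) ⊕ (Fin n ⊕ Fin n)) ((Fin m ⊕ Fin m) ⊕ (Fin n ⊕ Fin n)) ℂ :=
  fromBlocks (fromBlocks (calA2 m - l2 • 1) 0 0 (calA2 m - l2 • 1)) g12
             g21 (fromBlocks (calA1 n - l1 • 1) 0 0 (calA1 n - l1 • 1))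

/-- `G` as a matrix over the polynomial ring `ℂ[λ_1, λ_2]` (variables `X 0 = λ_1`, `X 1 = λ_2`). -/
def GPoly (m n : ℕ) (g12 : Matrix (Fin m ⊕ Fin m) (Fin n ⊕ Fin n) ℂ)
    (g21 : Matrix (Fin n ⊕ Fin n) (Fin m ⊕ Fin m) ℂ) :
    Matrix ((Fin m ⊕ Fin m) ⊕ (Fin n ⊕ Fin n)) ((Fin m ⊕ Fin m) ⊕ (Fin n ⊕ Fin n))
      (MvPolynomial (Fin 2) ℂ) :=
  fromBlocks
    (fromBlocks ((calA2 m).map MvPolynomial.C - (MvPolynomial.X 1 : MvPolynomial (Fin 2) ℂ) • 1) 0 0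
      ((calA2 m).map MvPolynomial.C - (MvPolynomial.X 1 : MvPolynomial (Fin 2) ℂ) • 1))
    (g12.map MvPolynomial.C)
    (g21.map MvPolynomial.C)
    (fromBlocks ((calA1 n).map MvPolynomial.C - (MvPolynomial.X 0 : MvPolynomial (Fin 2) ℂ) • 1) 0 0
      ((calA1 n).map MvPolynomial.C - (MvPolynomial.X 0 : MvPolynomial (Fin 2) ℂ) • 1))

/-- The vector `col[0_m; 𝟏_m; 0_n; 𝟏_n]`. -/
def eVec (m n : ℕ) : ((Fin m ⊕ Fin m) ⊕ (Fin n ⊕ Fin n)) → ℂ :=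
  Sum.elim (Sum.elim (0 : Fin m → ℂ) (onesV (Fin m))) (Sum.elim (0 : Fin n → ℂ) (onesV (Fin n)))

/-- `diag{J_{2m}U_{2m}, J_{2n}U_{2n}}`. -/
def DJU (m n : ℕ) :
    Matrix ((Fin m ⊕ Fin m) ⊕ (Fin n ⊕ Fin n)) ((Fin m ⊕ Fin m) ⊕ (Fin n ⊕ Fin n)) ℂ :=
  fromBlocks (J2 m * U2 m) 0 0 (J2 n * U2 n)

/-- The block column `col[I_m; I_m; …; I_m]`. -/
def EcolId (m n : ℕ) : Matrix (Fin n × Fin m) (Fin m) ℂ :=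
  Matrix.of fun r l => if r.2 = l then 1 else 0

/-!
For `R = T⁻¹`, the displacement equation `A_p T - T A_p^* = i Π_p Π̂_p` gives
`(λ_p - μ_p) R = (A_p^* - μ_p) R - R (A_p - λ_p) + i R Π_p Π̂_p R`.
Sandwich it between the row `𝟏^*(A_1^*-μ_1)^{-1}(A_2^*-μ_2)^{-1}` and the column
`(A_2-λ_2)^{-1}(A_1-λ_1)^{-1}𝟏`; as `A_1 = 𝒜_1 ⊗ I` and `A_2 = I ⊗ 𝒜_2` commute, the factor
`A_p - λ_p` (resp. `A_p^* - μ_p`) cancels its own resolvent. The last term is then the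
`Γ_p Γ̂_p` part of `u P_p û`. The other two are its cross terms with the correction vectors of
`u` and `û`, because the blocks `M_{2p}` and `M_{3p}` intertwine `A_{3-p}` with `𝒜_{3-p}` and
map all-ones vectors to all-ones vectors.
-/

section MatrixFacts

open scoped Kronecker

variable {α ι κ : Type*} [CommRing α] [DecidableEq ι] [DecidableEq κ]

lemma Commute.sub_smul_one_sub_smul_one {R A : Type*} [CommRing R] [Ring A] [Algebra R A]
    {x y : A} (h : Commute x y) (a b : R) : Commute (x - a • 1) (y - b • 1) :=
  (h.sub_right ((Commute.one_right x).smul_right b)).sub_left ((Commute.one_left _).smul_left a)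

lemma kronecker_one_sub_smul_one (a : Matrix ι ι α) (c : α) :
    a ⊗ₖ (1 : Matrix κ κ α) - c • 1 = (a - c • 1) ⊗ₖ (1 : Matrix κ κ α) := by
  ext ⟨p, j⟩ ⟨q, l⟩
  by_cases h : j = l <;> simp [one_apply, h, Prod.ext_iff]

lemma one_kronecker_sub_smul_one (b : Matrix κ κ α) (c : α) :
    (1 : Matrix ι ι α) ⊗ₖ b - c • 1 = (1 : Matrix ι ι α) ⊗ₖ (b - c • 1) := by
  ext ⟨p, j⟩ ⟨q, l⟩
  by_cases h : p = q <;> simp [one_apply, h, Prod.ext_iff]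

lemma isUnit_det_kronecker_one [Fintype ι] [Fintype κ] {a : Matrix ι ι α} (ha : IsUnit a.det) :
    IsUnit (a ⊗ₖ (1 : Matrix κ κ α)).det := by
  simpa [det_kronecker] using ha.pow _

lemma isUnit_det_one_kronecker [Fintype ι] [Fintype κ] {b : Matrix κ κ α} (hb : IsUnit b.det) :
    IsUnit ((1 : Matrix ι ι α) ⊗ₖ b).det := by
  simpa [det_kronecker] using hb.pow _

section Intertwining

variable [Fintype ι] [Fintype κ] {B : Matrix ι ι α} {C : Matrix κ κ α} {E : Matrix ι κ α}

lemma sub_smul_one_mul_eq_mul_sub_smul_one (h : B * E = E * C) (c : α) :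
    (B - c • 1) * E = E * (C - c • 1) := by
  simp [Matrix.sub_mul, Matrix.mul_sub, h]

lemma nonsing_inv_mul_eq_mul_nonsing_inv (h : B * E = E * C) (hB : IsUnit B.det)
    (hC : IsUnit C.det) : B⁻¹ * E = E * C⁻¹ := by
  calc B⁻¹ * E = B⁻¹ * (E * C) * C⁻¹ := by simp [Matrix.mul_assoc, hC]
    _ = E * C⁻¹ := by rw [← h, nonsing_inv_mul_cancel_left _ _ hB]

end Intertwining

end MatrixFacts

section Resolvent

variable {ι κ₁ κ₂ : Type*} [Fintype ι] [DecidableEq ι] [Fintype κ₁] [Fintype κ₂]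

lemma sub_smul_nonsing_inv_of_displacement {α : Type*} [CommRing α] {T A B P : Matrix ι ι α}
    (hT : IsUnit T.det) (hD : A * T - T * B = P) (l u : α) :
    (l - u) • T⁻¹ = (B - u • 1) * T⁻¹ - T⁻¹ * (A - l • 1) + T⁻¹ * P * T⁻¹ := by
  have h : T⁻¹ * A - B * T⁻¹ = T⁻¹ * P * T⁻¹ := by
    simp [← hD, Matrix.mul_sub, Matrix.sub_mul, Matrix.mul_assoc, hT]
  rw [← h, Matrix.sub_mul, Matrix.mul_sub, Matrix.smul_mul, Matrix.mul_smul, Matrix.one_mul,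
    Matrix.mul_one]
  module

lemma dotProduct_nonsing_inv_mulVec_eq_of_displacement {T A B : Matrix ι ι ℂ}
    {M : Matrix ι κ₁ ℂ} {N : Matrix ι κ₂ ℂ} {N' : Matrix κ₁ ι ℂ} {M' : Matrix κ₂ ι ℂ}
    {l u : ℂ} {x y : ι → ℂ} {c : κ₁ → ℂ} {d : κ₂ → ℂ} (hT : IsUnit T.det) (hlu : l ≠ u)
    (hD : A * T - T * B = Complex.I • (fromCols M N * fromRows N' M'))
    (hN : N *ᵥ d = (A - l • 1) *ᵥ x) (hN' : c ᵥ* N' = y ᵥ* (B - u • 1)) :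
    y ⬝ᵥ T⁻¹ *ᵥ x
      = Complex.I * (l - u)⁻¹ *
          ((y ᵥ* (T⁻¹ * fromCols M N) - Complex.I • Sum.elim c (0 : κ₂ → ℂ))
            ⬝ᵥ ((fromRows N' M' * T⁻¹) *ᵥ x + Complex.I • Sum.elim (0 : κ₁ → ℂ) d)) := by
  rw [mul_right_comm, eq_mul_inv_iff_mul_eq₀ (sub_ne_zero.2 hlu), mul_comm]
  have hleft : (y ᵥ* (T⁻¹ * fromCols M N)) ⬝ᵥ Sum.elim (0 : κ₁ → ℂ) d
      = (y ᵥ* T⁻¹) ⬝ᵥ ((A - l • 1) *ᵥ x) := by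
    rw [mul_fromCols, vecMul_fromCols, sumElim_dotProduct_sumElim, dotProduct_zero, zero_add,
      ← hN, dotProduct_mulVec, vecMul_vecMul]
  have hright : Sum.elim c (0 : κ₂ → ℂ) ⬝ᵥ ((fromRows N' M' * T⁻¹) *ᵥ x)
      = (y ᵥ* (B - u • 1)) ⬝ᵥ (T⁻¹ *ᵥ x) := by
    rw [fromRows_mul, fromRows_mulVec, sumElim_dotProduct_sumElim, zero_dotProduct, add_zero,
      ← hN', dotProduct_mulVec, dotProduct_mulVec, vecMul_vecMul]
  have hcorner : Sum.elim c (0 : κ₂ → ℂ) ⬝ᵥ Sum.elim (0 : κ₁ → ℂ) d = 0 := by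
    simp
  have hscalar := congrArg (fun X => y ⬝ᵥ X *ᵥ x) (sub_smul_nonsing_inv_of_displacement hT hD l u)
  simp only [Matrix.mul_smul, Matrix.smul_mul, smul_mulVec, add_mulVec, sub_mulVec,
    dotProduct_add, dotProduct_sub, dotProduct_smul, smul_eq_mul] at hscalar
  simp only [dotProduct_add, sub_dotProduct, dotProduct_smul, smul_dotProduct, smul_eq_mul,
    hleft, hright, hcorner]
  simp only [dotProduct_mulVec, vecMul_vecMul, Matrix.mul_assoc] at hscalar ⊢
  linear_combination hscalar + ((y ᵥ* ((B - u • 1) * T⁻¹)) ⬝ᵥ x) * Complex.I_mul_I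
    - ((y ᵥ* (T⁻¹ * (A - l • 1))) ⬝ᵥ x) * Complex.I_mul_I

end Resolvent

section ToeplitzDisplacement

open Finset

lemma aC_of_neg {r : ℤ} (h : r < 0) : aC r = 0 := by simp [aC, h]

lemma aC_zero : aC 0 = Complex.I / 2 := by simp [aC]

lemma aC_of_pos {r : ℤ} (h : 0 < r) : aC r = Complex.I := by
  simp [aC, h.not_gt, h.ne']

lemma star_aC (r : ℤ) : star (aC r) = -aC r := by
  unfold aC
  split_ifs <;> simp [Complex.conj_I, neg_div]

lemma sum_aC_sub_mul {k : ℕ} (p : Fin k) (g : ℤ → ℂ) :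
    ∑ s : Fin k, aC ((p : ℤ) - (s : ℕ)) * g (s : ℕ)
      = Complex.I / 2 * g p + Complex.I * ∑ s ∈ range p, g s := by
  rw [Fin.sum_univ_eq_sum_range (fun s : ℕ => aC ((p : ℤ) - s) * g s),
    ← sum_range_add_sum_Ico _ p.isLt, sum_eq_zero (s := Ico _ k), add_zero, sum_range_succ,
    sub_self, aC_zero, mul_sum, add_comm]
  · exact congrArg₂ _ rfl (sum_congr rfl fun s hs => by
      rw [aC_of_pos (by simp at hs; omega)])
  · intro s hs
    rw [aC_of_neg (by simp at hs; omega), zero_mul]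

-- Both sides are `∑ k ∈ Icc (-q) p, f k`.
lemma sum_range_sub_add_sum_range_sub (f : ℤ → ℂ) (p q : ℕ) :
    f ((p : ℤ) - q) + ∑ s ∈ range p, f ((s : ℤ) - q) + ∑ s ∈ range q, f ((p : ℤ) - s)
      = f 0 + ∑ s ∈ range p, f ((s : ℤ) + 1) + ∑ s ∈ range q, f (-((s : ℤ) + 1)) := by
  induction q with
  | zero =>
    have h := (sum_range_succ (fun s : ℕ => f s) p).symm.trans (sum_range_succ' _ p)
    push_cast at h
    simpa [add_comm] using h
  | succ q ih =>
    have h := (sum_range_succ (fun s : ℕ => f (s - (q + 1))) p).symm.trans (sum_range_succ' _ p)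
    push_cast at h ⊢
    simp only [add_sub_add_right_eq_sub, zero_sub] at h
    rw [sum_range_succ, sum_range_succ]
    linear_combination h + ih

lemma sum_aC_mul_add_sum_mul_aC {k : ℕ} (f : ℤ → ℂ) (p q : Fin k) :
    ∑ s : Fin k, aC ((p : ℤ) - (s : ℕ)) * f ((s : ℕ) - (q : ℕ))
        + ∑ s : Fin k, f ((p : ℕ) - (s : ℕ)) * aC ((q : ℤ) - (s : ℕ))
      = Complex.I * (f 0 + ∑ s ∈ range p, f ((s : ℤ) + 1)
          + ∑ s ∈ range q, f (-((s : ℤ) + 1))) := by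
  simp_rw [mul_comm (f _)]
  rw [sum_aC_sub_mul p (fun z => f (z - q)), sum_aC_sub_mul q (fun z => f (p - z)),
    ← sum_range_sub_add_sum_range_sub]
  ring

lemma TBT_displacement₁ (m n : ℕ) (t : ℤ → ℤ → ℂ) :
    A1 m n * TBT m n t - TBT m n t * (A1 m n)ᴴ = Complex.I • (Pi1 m n t * PiHat1 m n t) := by
  ext ⟨p, j⟩ ⟨q, l⟩
  simp only [Matrix.sub_apply, Matrix.smul_apply, mul_apply, smul_eq_mul, Fintype.sum_prod_type,
    Fintype.sum_sum_type, Pi1, PiHat1, fromCols, fromRows_apply_inl, fromRows_apply_inr,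
    of_apply, Sum.elim_inl, Sum.elim_inr, A1, TBT, conjTranspose_apply, M21, M31, M11, M41,
    ite_mul, mul_ite, zero_mul, mul_zero, apply_ite (star : ℂ → ℂ), sum_ite_eq, sum_ite_eq',
    mem_univ, if_true, star_one, star_zero, mul_one, star_aC, mul_neg, sum_neg_distrib,
    sub_neg_eq_add]
  linear_combination sum_aC_mul_add_sum_mul_aC (fun r => t r ((j : ℕ) - (l : ℕ))) p q

lemma TBT_displacement₂ (m n : ℕ) (t : ℤ → ℤ → ℂ) :
    A2 m n * TBT m n t - TBT m n t * (A2 m n)ᴴ = Complex.I • (Pi2 m n t * PiHat2 m n t) := by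
  ext ⟨p, j⟩ ⟨q, l⟩
  simp only [Matrix.sub_apply, Matrix.smul_apply, mul_apply, smul_eq_mul, Fintype.sum_prod_type,
    Fintype.sum_sum_type, Pi2, PiHat2, fromCols, fromRows_apply_inl, fromRows_apply_inr,
    of_apply, Sum.elim_inl, Sum.elim_inr, A2, TBT, conjTranspose_apply, M22, M32, M12, M42,
    m12e, m42e, ite_mul, mul_ite, zero_mul, mul_zero, apply_ite (star : ℂ → ℂ), sum_ite_irrel,
    sum_const_zero, sum_ite_eq, sum_ite_eq', mem_univ, if_true, star_one, star_zero, mul_one,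
    star_aC, mul_neg, sum_neg_distrib, sub_neg_eq_add]
  linear_combination sum_aC_mul_add_sum_mul_aC (fun r => t ((p : ℕ) - (q : ℕ)) r) j l

end ToeplitzDisplacement

section Kronecker

open scoped Kronecker

lemma A1_eq_kronecker (m n : ℕ) : A1 m n = calA1 n ⊗ₖ (1 : Matrix (Fin m) (Fin m) ℂ) := by
  ext ⟨p, j⟩ ⟨q, l⟩
  simp [A1, calA1, one_apply]

lemma A2_eq_kronecker (m n : ℕ) : A2 m n = (1 : Matrix (Fin n) (Fin n) ℂ) ⊗ₖ calA2 m := by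
  ext ⟨p, j⟩ ⟨q, l⟩
  simp [A2, calA2, one_apply]

lemma commute_A1_A2 (m n : ℕ) : Commute (A1 m n) (A2 m n) := by
  rw [A1_eq_kronecker, A2_eq_kronecker, Commute, SemiconjBy, ← mul_kronecker_mul,
    ← mul_kronecker_mul, Matrix.mul_one, Matrix.one_mul, Matrix.mul_one, Matrix.one_mul]

end Kronecker

-- These also serve for `calA2 m`, which is the same matrix as `calA1 m`.
lemma det_calA1_sub (k : ℕ) (c : ℂ) : (calA1 k - c • 1).det = (Complex.I / 2 - c) ^ k := by
  rw [det_of_isLowerTriangular]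
  · simp [calA1, aC_zero]
  · intro i j hij
    have : (i : ℤ) < j := by exact_mod_cast hij
    simp [calA1, aC_of_neg (sub_neg.2 this), one_apply_ne (show i ≠ j by omega)]

lemma isUnit_det_calA1_sub (k : ℕ) {c : ℂ} (hc : c ≠ Complex.I / 2) :
    IsUnit (calA1 k - c • 1).det := by
  rw [det_calA1_sub]
  exact (pow_ne_zero _ (sub_ne_zero.2 hc.symm)).isUnit

lemma isUnit_det_calA1_conjTranspose_sub (k : ℕ) {c : ℂ} (hc : c ≠ -(Complex.I / 2)) :
    IsUnit ((calA1 k)ᴴ - c • 1).det := by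
  have hc' : star c ≠ Complex.I / 2 := by
    contrapose! hc
    simpa [neg_div] using congrArg star hc
  have h : (calA1 k)ᴴ - c • 1 = (calA1 k - star c • 1)ᴴ := by simp
  rw [h, det_conjTranspose]
  exact (isUnit_det_calA1_sub k hc').star

section Blocks

variable (m n : ℕ)

lemma A2_mul_M31 : A2 m n * M31 m n = M31 m n * calA2 m := by
  ext ⟨p, j⟩ l
  simp [mul_apply, Fintype.sum_prod_type, M31, M21, A2, calA2]

lemma A1_mul_M32 : A1 m n * M32 m n = M32 m n * calA1 n := by
  ext ⟨p, j⟩ q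
  simp [mul_apply, Fintype.sum_prod_type, M32, M22, A1, calA1]

lemma M21_mul_A2_conjTranspose : M21 m n * (A2 m n)ᴴ = (calA2 m)ᴴ * M21 m n := by
  simpa [M31] using congrArg conjTranspose (A2_mul_M31 m n)

lemma M22_mul_A1_conjTranspose : M22 m n * (A1 m n)ᴴ = (calA1 n)ᴴ * M22 m n := by
  simpa [M32] using congrArg conjTranspose (A1_mul_M32 m n)

lemma M31_mulVec_onesV : M31 m n *ᵥ onesV (Fin m) = onesV (Fin n × Fin m) := by
  ext ⟨q, l⟩
  simp [mulVec, dotProduct, M31, M21, onesV]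

lemma M32_mulVec_onesV : M32 m n *ᵥ onesV (Fin n) = onesV (Fin n × Fin m) := by
  ext ⟨q, l⟩
  simp [mulVec, dotProduct, M32, M22, onesV]

lemma onesV_vecMul_M21 : onesV (Fin m) ᵥ* M21 m n = onesV (Fin n × Fin m) := by
  ext ⟨q, l⟩
  simp [vecMul, dotProduct, M21, onesV]

lemma onesV_vecMul_M22 : onesV (Fin n) ᵥ* M22 m n = onesV (Fin n × Fin m) := by
  ext ⟨q, l⟩
  simp [vecMul, dotProduct, M22, onesV]

end Blocks

section Resolvents

variable {m n : ℕ} {l1 l2 u1 u2 : ℂ}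

lemma isUnit_det_A1_sub (hl : l1 ≠ Complex.I / 2) : IsUnit (A1 m n - l1 • 1).det := by
  rw [A1_eq_kronecker, kronecker_one_sub_smul_one]
  exact isUnit_det_kronecker_one (isUnit_det_calA1_sub n hl)

lemma isUnit_det_A2_sub (hl : l2 ≠ Complex.I / 2) : IsUnit (A2 m n - l2 • 1).det := by
  rw [A2_eq_kronecker, one_kronecker_sub_smul_one]
  exact isUnit_det_one_kronecker (isUnit_det_calA1_sub m hl)

lemma isUnit_det_A1_conjTranspose_sub (hu : u1 ≠ -(Complex.I / 2)) :
    IsUnit ((A1 m n)ᴴ - u1 • 1).det := by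
  rw [A1_eq_kronecker, conjTranspose_kronecker, conjTranspose_one, kronecker_one_sub_smul_one]
  exact isUnit_det_kronecker_one (isUnit_det_calA1_conjTranspose_sub n hu)

lemma isUnit_det_A2_conjTranspose_sub (hu : u2 ≠ -(Complex.I / 2)) :
    IsUnit ((A2 m n)ᴴ - u2 • 1).det := by
  rw [A2_eq_kronecker, conjTranspose_kronecker, conjTranspose_one, one_kronecker_sub_smul_one]
  exact isUnit_det_one_kronecker (isUnit_det_calA1_conjTranspose_sub m hu)

lemma commute_A1_sub_A2_sub (a b : ℂ) : Commute (A1 m n - a • 1) (A2 m n - b • 1) :=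
  (commute_A1_A2 m n).sub_smul_one_sub_smul_one a b

lemma commute_A1_conjTranspose_sub_A2_conjTranspose_sub (a b : ℂ) :
    Commute ((A1 m n)ᴴ - a • 1) ((A2 m n)ᴴ - b • 1) :=
  (commute_star_star.2 (commute_A1_A2 m n)).sub_smul_one_sub_smul_one a b

variable (m n) in
def resolventRow (u1 u2 : ℂ) : Fin n × Fin m → ℂ :=
  onesV (Fin n × Fin m) ᵥ* (((A1 m n)ᴴ - u1 • 1)⁻¹ * ((A2 m n)ᴴ - u2 • 1)⁻¹)

variable (m n) in
def resolventCol (l1 l2 : ℂ) : Fin n × Fin m → ℂ :=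
  ((A2 m n - l2 • 1)⁻¹ * (A1 m n - l1 • 1)⁻¹) *ᵥ onesV (Fin n × Fin m)

lemma M31_mulVec_eq_A1_sub_mulVec_resolventCol (hl1 : l1 ≠ Complex.I / 2)
    (hl2 : l2 ≠ Complex.I / 2) :
    M31 m n *ᵥ ((calA2 m - l2 • 1)⁻¹ *ᵥ onesV (Fin m))
      = (A1 m n - l1 • 1) *ᵥ resolventCol m n l1 l2 := by
  have hZ : IsUnit (A2 m n - l2 • 1).det := isUnit_det_A2_sub hl2
  have hM31 := nonsing_inv_mul_eq_mul_nonsing_inv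
    (sub_smul_one_mul_eq_mul_sub_smul_one (A2_mul_M31 m n) l2) hZ (isUnit_det_calA1_sub m hl2)
  have hA1 := nonsing_inv_mul_eq_mul_nonsing_inv (commute_A1_sub_A2_sub l1 l2).eq.symm hZ hZ
  rw [resolventCol, mulVec_mulVec, mulVec_mulVec, ← hM31, ← Matrix.mul_assoc, ← hA1,
    mul_nonsing_inv_cancel_right _ _ (isUnit_det_A1_sub hl1), ← mulVec_mulVec,
    M31_mulVec_onesV]

lemma vecMul_M21_eq_resolventRow_vecMul_A1_conjTranspose_sub (hu1 : u1 ≠ -(Complex.I / 2))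
    (hu2 : u2 ≠ -(Complex.I / 2)) :
    (onesV (Fin m) ᵥ* ((calA2 m)ᴴ - u2 • 1)⁻¹) ᵥ* M21 m n
      = resolventRow m n u1 u2 ᵥ* ((A1 m n)ᴴ - u1 • 1) := by
  have hW : IsUnit ((A2 m n)ᴴ - u2 • 1).det := isUnit_det_A2_conjTranspose_sub hu2
  have hM21 := nonsing_inv_mul_eq_mul_nonsing_inv
    (sub_smul_one_mul_eq_mul_sub_smul_one (M21_mul_A2_conjTranspose m n).symm u2)
    (isUnit_det_calA1_conjTranspose_sub m hu2) hW
  have hA1 := nonsing_inv_mul_eq_mul_nonsing_inv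
    (commute_A1_conjTranspose_sub_A2_conjTranspose_sub u1 u2).eq.symm hW hW
  rw [resolventRow, vecMul_vecMul, vecMul_vecMul, hM21, Matrix.mul_assoc, hA1,
    nonsing_inv_mul_cancel_left _ _ (isUnit_det_A1_conjTranspose_sub hu1), ← vecMul_vecMul,
    onesV_vecMul_M21]

lemma M32_mulVec_eq_A2_sub_mulVec_resolventCol (hl1 : l1 ≠ Complex.I / 2)
    (hl2 : l2 ≠ Complex.I / 2) :
    M32 m n *ᵥ ((calA1 n - l1 • 1)⁻¹ *ᵥ onesV (Fin n))
      = (A2 m n - l2 • 1) *ᵥ resolventCol m n l1 l2 := by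
  have hM32 := nonsing_inv_mul_eq_mul_nonsing_inv
    (sub_smul_one_mul_eq_mul_sub_smul_one (A1_mul_M32 m n) l1) (isUnit_det_A1_sub hl1)
    (isUnit_det_calA1_sub n hl1)
  rw [resolventCol, mulVec_mulVec, mulVec_mulVec, ← hM32,
    mul_nonsing_inv_cancel_left _ _ (isUnit_det_A2_sub hl2), ← mulVec_mulVec, M32_mulVec_onesV]

lemma vecMul_M22_eq_resolventRow_vecMul_A2_conjTranspose_sub (hu1 : u1 ≠ -(Complex.I / 2))
    (hu2 : u2 ≠ -(Complex.I / 2)) :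
    (onesV (Fin n) ᵥ* ((calA1 n)ᴴ - u1 • 1)⁻¹) ᵥ* M22 m n
      = resolventRow m n u1 u2 ᵥ* ((A2 m n)ᴴ - u2 • 1) := by
  have hM22 := nonsing_inv_mul_eq_mul_nonsing_inv
    (sub_smul_one_mul_eq_mul_sub_smul_one (M22_mul_A1_conjTranspose m n).symm u1)
    (isUnit_det_calA1_conjTranspose_sub n hu1) (isUnit_det_A1_conjTranspose_sub hu1)
  rw [resolventRow, vecMul_vecMul, vecMul_vecMul, hM22,
    nonsing_inv_mul_cancel_right _ _ (isUnit_det_A2_conjTranspose_sub hu2), ← vecMul_vecMul,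
    onesV_vecMul_M22]

end Resolvents

section Assembly

variable (m n : ℕ) (t : ℤ → ℤ → ℂ) (l1 l2 u1 u2 : ℂ)

lemma star_onesV (k : Type*) : star (onesV k) = onesV k := by
  ext
  simp [onesV]

lemma omegaF_eq :
    omegaF m n t l1 l2 u1 u2
      = resolventRow m n u1 u2 ⬝ᵥ (TBT m n t)⁻¹ *ᵥ resolventCol m n l1 l2 := by
  simp only [omegaF, resolventRow, resolventCol, star_onesV, dotProduct_mulVec, vecMul_vecMul,
    Matrix.mul_assoc]

lemma uRow_eq :
    uRow m n t u1 u2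
      = Sum.elim
          (resolventRow m n u1 u2 ᵥ* ((TBT m n t)⁻¹ * Pi1 m n t)
            - Complex.I • Sum.elim (onesV (Fin m) ᵥ* ((calA2 m)ᴴ - u2 • 1)⁻¹) 0)
          (resolventRow m n u1 u2 ᵥ* ((TBT m n t)⁻¹ * Pi2 m n t)
            - Complex.I • Sum.elim (onesV (Fin n) ᵥ* ((calA1 n)ᴴ - u1 • 1)⁻¹) 0) := by
  ext (i | i) <;>
    simp [uRow, GammaFull, Gam1, Gam2, resolventRow, star_onesV, vecMul_vecMul, Matrix.mul_assoc]

lemma uHatCol_eq :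
    uHatCol m n t l1 l2
      = Sum.elim
          ((PiHat1 m n t * (TBT m n t)⁻¹) *ᵥ resolventCol m n l1 l2
            + Complex.I • Sum.elim (0 : Fin m → ℂ) ((calA2 m - l2 • 1)⁻¹ *ᵥ onesV (Fin m)))
          ((PiHat2 m n t * (TBT m n t)⁻¹) *ᵥ resolventCol m n l1 l2
            + Complex.I • Sum.elim (0 : Fin n → ℂ) ((calA1 n - l1 • 1)⁻¹ *ᵥ onesV (Fin n))) := by
  ext (i | i) <;>
    simp [uHatCol, GammaHatFull, GamHat1, GamHat2, resolventCol, mulVec_mulVec, Matrix.mul_assoc]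

lemma P1M_mulVec_sumElim (v : Fin m ⊕ Fin m → ℂ) (w : Fin n ⊕ Fin n → ℂ) :
    P1M m n *ᵥ Sum.elim v w = Sum.elim v 0 := by
  simp [P1M, fromBlocks_mulVec]

lemma P2M_mulVec_sumElim (v : Fin m ⊕ Fin m → ℂ) (w : Fin n ⊕ Fin n → ℂ) :
    P2M m n *ᵥ Sum.elim v w = Sum.elim (0 : Fin m ⊕ Fin m → ℂ) w := by
  ext (i | i) <;> simp [P2M, sub_mulVec, P1M_mulVec_sumElim]

end Assembly

theorem omega_simple_representations_general (m n : ℕ) (t : ℤ → ℤ → ℂ)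
    (hT : IsUnit (TBT m n t)) (l1 l2 u1 u2 : ℂ)
    (hl1 : l1 ≠ Complex.I / 2) (hl2 : l2 ≠ Complex.I / 2)
    (hu1 : u1 ≠ -(Complex.I / 2)) (hu2 : u2 ≠ -(Complex.I / 2)) :
    (l1 ≠ u1 →
      omegaF m n t l1 l2 u1 u2
        = Complex.I * (l1 - u1)⁻¹ *
            (uRow m n t u1 u2 ⬝ᵥ (P1M m n *ᵥ uHatCol m n t l1 l2))) ∧
    (l2 ≠ u2 →
      omegaF m n t l1 l2 u1 u2
        = Complex.I * (l2 - u2)⁻¹ *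
            (uRow m n t u1 u2 ⬝ᵥ (P2M m n *ᵥ uHatCol m n t l1 l2))) := by
  have hT' : IsUnit (TBT m n t).det := (isUnit_iff_isUnit_det _).1 hT
  rw [omegaF_eq, uRow_eq, uHatCol_eq, P1M_mulVec_sumElim, P2M_mulVec_sumElim]
  simp only [sumElim_dotProduct_sumElim, dotProduct_zero, add_zero, zero_add]
  exact ⟨fun h1 => dotProduct_nonsing_inv_mulVec_eq_of_displacement hT' h1
      (TBT_displacement₁ m n t) (M31_mulVec_eq_A1_sub_mulVec_resolventCol hl1 hl2)
      (vecMul_M21_eq_resolventRow_vecMul_A1_conjTranspose_sub hu1 hu2),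
    fun h2 => dotProduct_nonsing_inv_mulVec_eq_of_displacement hT' h2
      (TBT_displacement₂ m n t) (M32_mulVec_eq_A2_sub_mulVec_resolventCol hl1 hl2)
      (vecMul_M22_eq_resolventRow_vecMul_A2_conjTranspose_sub hu1 hu2)⟩

/-- Proposition 2.1: `ω(λ,μ) = i(λ_p − μ_p)^{-1} u(μ) P_p û(λ)` for `p = 1, 2`. -/
theorem omega_simple_representations (m n : ℕ) (hm : 0 < m) (hn : 0 < n) (t : ℤ → ℤ → ℂ)
    (hT : IsUnit (TBT m n t)) (l1 l2 u1 u2 : ℂ)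
    (hl1 : l1 ≠ Complex.I / 2) (hl2 : l2 ≠ Complex.I / 2)
    (hu1 : u1 ≠ -(Complex.I / 2)) (hu2 : u2 ≠ -(Complex.I / 2)) :
    (l1 ≠ u1 →
      omegaF m n t l1 l2 u1 u2
        = Complex.I * (l1 - u1)⁻¹ *
            (uRow m n t u1 u2 ⬝ᵥ (P1M m n *ᵥ uHatCol m n t l1 l2))) ∧
    (l2 ≠ u2 →
      omegaF m n t l1 l2 u1 u2
        = Complex.I * (l2 - u2)⁻¹ *
            (uRow m n t u1 u2 ⬝ᵥ (P2M m n *ᵥ uHatCol m n t l1 l2))) :=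
  omega_simple_representations_general m n t hT l1 l2 u1 u2 hl1 hl2 hu1 hu2

end
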